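/- Let a, b be real numbers with 0 < a ≤ b. Then the function Z ↦ log₂(1 + bZ) − log₂(1 + aZ) is concave on the interval [0, ∞). -/

import Mathlib

/-!
The derivative of `Z ↦ log (1 + b Z) - log (1 + a Z)` is
`b / (1 + b Z) - a / (1 + a Z) = (b - a) / ((1 + a Z) (1 + b Z))`: a nonnegative constant over a
positive increasing denominator, hence antitone on `[0, ∞)`. Passing to `logb 2` only rescales
by `(log 2)⁻¹ > 0`.
-/

open Real Set

lemma hasDerivAt_log_one_add_mul {c x : ℝ} (hx : 1 + c * x ≠ 0) :
    HasDerivAt (fun Z => log (1 + c * Z)) (c / (1 + c * x)) x := by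
  simpa using (((hasDerivAt_id x).const_mul c).const_add 1).log hx

lemma hasDerivAt_log_one_add_mul_sub_log_one_add_mul {a b Z : ℝ} (ha : 1 + a * Z ≠ 0)
    (hb : 1 + b * Z ≠ 0) :
    HasDerivAt (fun Z => log (1 + b * Z) - log (1 + a * Z))
      ((b - a) / ((1 + a * Z) * (1 + b * Z))) Z := by
  refine ((hasDerivAt_log_one_add_mul hb).sub (hasDerivAt_log_one_add_mul ha)).congr_deriv ?_
  rw [div_sub_div _ _ hb ha]
  ring

lemma antitoneOn_sub_div_mul_one_add_mul {a b : ℝ} (ha : 0 ≤ a) (hab : a ≤ b) :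
    AntitoneOn (fun Z => (b - a) / ((1 + a * Z) * (1 + b * Z))) (Ici 0) := by
  intro x (hx : 0 ≤ x) y (hy : 0 ≤ y) hxy
  have hb : 0 ≤ b := ha.trans hab
  apply div_le_div_of_nonneg_left (sub_nonneg.2 hab) (by positivity)
  gcongr

theorem concaveOn_log_one_add_mul_sub_log_one_add_mul {a b : ℝ} (ha : 0 ≤ a) (hab : a ≤ b) :
    ConcaveOn ℝ (Ici 0) (fun Z => log (1 + b * Z) - log (1 + a * Z)) := by
  have hb : 0 ≤ b := ha.trans hab
  have hderiv : ∀ Z ∈ Ici (0 : ℝ), HasDerivAt (fun Z => log (1 + b * Z) - log (1 + a * Z))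
      ((b - a) / ((1 + a * Z) * (1 + b * Z))) Z := fun Z (hZ : 0 ≤ Z) =>
    hasDerivAt_log_one_add_mul_sub_log_one_add_mul (by positivity) (by positivity)
  refine AntitoneOn.concaveOn_of_deriv (convex_Ici 0)
    (fun Z hZ => (hderiv Z hZ).continuousAt.continuousWithinAt)
    (fun Z hZ => (hderiv Z (interior_subset hZ)).differentiableAt.differentiableWithinAt) ?_
  refine ((antitoneOn_sub_div_mul_one_add_mul ha hab).mono interior_subset).congr ?_
  exact fun Z hZ => (hderiv Z (interior_subset hZ)).deriv.symm

/-- Core of Theorem 1: for `0 < a ≤ b`, the function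
`Z ↦ log₂(1 + bZ) − log₂(1 + aZ)` is concave on `[0, ∞)`. -/
theorem stmt_2 (a b : ℝ) (ha : 0 < a) (hab : a ≤ b) :
    ConcaveOn ℝ (Set.Ici (0 : ℝ))
      (fun Z => Real.logb 2 (1 + b * Z) - Real.logb 2 (1 + a * Z)) := by
  have h := (concaveOn_log_one_add_mul_sub_log_one_add_mul ha.le hab).smul
    (inv_nonneg.2 (log_nonneg one_le_two))
  refine h.congr fun Z _ => ?_
  simp only [smul_eq_mul, logb]
  ring
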